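/- If every temporal operator in a BSL state formula φ occurs under the scope of a path quantifier E, then every temporal operator in the SL formula tr_A(φ) occurs under the scope of a binding (b, y) for each agent b ∈ Ag, for any parameter set A ⊆ Ag. In particular, if φ is a BSL sentence then tr_Ag(φ) is an SL sentence. -/

import Mathlib

/-- A concurrent game structure: transition function, initial state, valuation. -/
structure CGS (S Ag Act AP : Type) where
  δ : S → (Ag → Act) → S
  init : S
  val : S → AP → Prop

variable {S Ag Act AP Var : Type}

/-- An initial (finite) path: a start state together with the list of decisions taken. -/
abbrev FPath (S Ag Act : Type) := S × List (Ag → Act)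

/-- Last state of an initial path. -/
def CGS.lastState (G : CGS S Ag Act AP) (ρ : FPath S Ag Act) : S :=
  ρ.2.foldl G.δ ρ.1

/-- A strategy assigns an action to every initial path. -/
abbrev Strat (S Ag Act : Type) := FPath S Ag Act → Act

/-- Concatenation of initial paths (meaningful when `G.lastState ρ = ρ'.1`,
i.e. they are glued at the shared state). -/
def FPath.concat (ρ ρ' : FPath S Ag Act) : FPath S Ag Act := (ρ.1, ρ.2 ++ ρ'.2)

/-- The finite prefix with `n` decisions of the play from `q` whose decision stream is `d`. -/
def prefixPath (q : S) (d : ℕ → Ag → Act) (n : ℕ) : FPath S Ag Act :=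
  (q, List.ofFn fun i : Fin n => d i)

/-- The state reached after `i` steps of the play from `q` with decision stream `d`. -/
def stateAt (G : CGS S Ag Act AP) (q : S) (d : ℕ → Ag → Act) (i : ℕ) : S :=
  G.lastState (prefixPath q d i)

/-- An assignment: a partial map from agents and variables to strategies. -/
abbrev Assign (S Ag Act Var : Type) := Ag ⊕ Var → Option (Strat S Ag Act)

/-- The outcome of an assignment from a state: the set of plays (identified with
their decision streams) compatible with all strategies assigned to agents. -/
def outcome (G : CGS S Ag Act AP) (q : S) (χ : Assign S Ag Act Var) :
    Set (ℕ → Ag → Act) :=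
  {d | ∀ (k : ℕ) (a : Ag) (σ : Strat S Ag Act),
      χ (Sum.inl a) = some σ → d k a = σ (prefixPath q d k)}

/-- The `ρ`-translation of a strategy. -/
def transStrat [DecidableEq S] (G : CGS S Ag Act AP) (ρ : FPath S Ag Act)
    (σ : Strat S Ag Act) : Strat S Ag Act :=
  fun ρ' => if ρ'.1 = G.lastState ρ then σ (ρ.concat ρ') else σ ρ'

/-- The `ρ`-translation of an assignment. -/
def transAssign [DecidableEq S] (G : CGS S Ag Act AP) (ρ : FPath S Ag Act)
    (χ : Assign S Ag Act Var) : Assign S Ag Act Var :=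
  fun l => (χ l).map (transStrat G ρ)

/-- Syntax of Strategy Logic (SL). -/
inductive SLForm (AP Ag Var : Type) : Type where
  | atom : AP → SLForm AP Ag Var
  | neg  : SLForm AP Ag Var → SLForm AP Ag Var
  | or   : SLForm AP Ag Var → SLForm AP Ag Var → SLForm AP Ag Var
  | next : SLForm AP Ag Var → SLForm AP Ag Var
  | untl : SLForm AP Ag Var → SLForm AP Ag Var → SLForm AP Ag Var
  | exi  : Var → SLForm AP Ag Var → SLForm AP Ag Var
  | bind : Ag → Var → SLForm AP Ag Var → SLForm AP Ag Var

mutual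
/-- State formulas of Branching-time Strategy Logic (BSL). -/
inductive BSLForm (AP Ag Var : Type) : Type where
  | atom : AP → BSLForm AP Ag Var
  | neg  : BSLForm AP Ag Var → BSLForm AP Ag Var
  | or   : BSLForm AP Ag Var → BSLForm AP Ag Var → BSLForm AP Ag Var
  | exi  : Var → BSLForm AP Ag Var → BSLForm AP Ag Var
  | bind : Ag → Var → BSLForm AP Ag Var → BSLForm AP Ag Var
  | unbind : Ag → BSLForm AP Ag Var → BSLForm AP Ag Var
  | pathE : BSLPath AP Ag Var → BSLForm AP Ag Var
/-- Path formulas of BSL. -/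
inductive BSLPath (AP Ag Var : Type) : Type where
  | state : BSLForm AP Ag Var → BSLPath AP Ag Var
  | neg   : BSLPath AP Ag Var → BSLPath AP Ag Var
  | or    : BSLPath AP Ag Var → BSLPath AP Ag Var → BSLPath AP Ag Var
  | next  : BSLPath AP Ag Var → BSLPath AP Ag Var
  | untl  : BSLPath AP Ag Var → BSLPath AP Ag Var → BSLPath AP Ag Var
end

/-- Semantics of SL. Temporal operators are evaluated on an outcome play of the
current assignment (for complete assignments — the only case where the SL
semantics is defined — this play is unique), with the assignment translated
along the play. -/
def SLsat [DecidableEq S] [DecidableEq Ag] [DecidableEq Var] (G : CGS S Ag Act AP) :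
    Assign S Ag Act Var → S → SLForm AP Ag Var → Prop
  | χ, q, .atom p => G.val q p
  | χ, q, .neg φ => ¬ SLsat G χ q φ
  | χ, q, .or φ φ' => SLsat G χ q φ ∨ SLsat G χ q φ'
  | χ, q, .exi x φ =>
      ∃ σ : Strat S Ag Act, SLsat G (Function.update χ (Sum.inr x) (some σ)) q φ
  | χ, q, .bind a x φ => SLsat G (Function.update χ (Sum.inl a) (χ (Sum.inr x))) q φ
  | χ, q, .next φ => ∃ d ∈ outcome G q χ,
      SLsat G (transAssign G (prefixPath q d 1) χ) (stateAt G q d 1) φ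
  | χ, q, .untl φ φ' => ∃ d ∈ outcome G q χ, ∃ j : ℕ,
      SLsat G (transAssign G (prefixPath q d j) χ) (stateAt G q d j) φ' ∧
      ∀ k < j, SLsat G (transAssign G (prefixPath q d k) χ) (stateAt G q d k) φ

mutual
/-- Semantics of BSL state formulas, at a state under an assignment. -/
def BSLsat [DecidableEq S] [DecidableEq Ag] [DecidableEq Var] (G : CGS S Ag Act AP)
    (χ : Assign S Ag Act Var) (q : S) : BSLForm AP Ag Var → Prop
  | .atom p => G.val q p
  | .neg φ => ¬ BSLsat G χ q φ
  | .or φ φ' => BSLsat G χ q φ ∨ BSLsat G χ q φ'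
  | .exi x φ =>
      ∃ σ : Strat S Ag Act, BSLsat G (Function.update χ (Sum.inr x) (some σ)) q φ
  | .bind a x φ => BSLsat G (Function.update χ (Sum.inl a) (χ (Sum.inr x))) q φ
  | .unbind a φ => BSLsat G (Function.update χ (Sum.inl a) none) q φ
  | .pathE ψ => ∃ d ∈ outcome G q χ, BSLsatP G χ q d 0 ψ

/-- Semantics of BSL path formulas, on the play from `q` with decision stream
`d`, at position `i`; the assignment is translated by the prefix as state
formulas are evaluated. -/
def BSLsatP [DecidableEq S] [DecidableEq Ag] [DecidableEq Var] (G : CGS S Ag Act AP)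
    (χ : Assign S Ag Act Var) (q : S) (d : ℕ → Ag → Act) (i : ℕ) :
    BSLPath AP Ag Var → Prop
  | .state φ => BSLsat G (transAssign G (prefixPath q d i) χ) (stateAt G q d i) φ
  | .neg ψ => ¬ BSLsatP G χ q d i ψ
  | .or ψ ψ' => BSLsatP G χ q d i ψ ∨ BSLsatP G χ q d i ψ'
  | .next ψ => BSLsatP G χ q d (i + 1) ψ
  | .untl ψ ψ' => ∃ j, i ≤ j ∧ BSLsatP G χ q d j ψ' ∧
      ∀ k, i ≤ k → k < j → BSLsatP G χ q d k ψ
end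

/-- Free variables of an SL formula. -/
def SLfree : SLForm AP Ag Var → Set Var
  | .atom _ => ∅
  | .neg φ => SLfree φ
  | .or φ φ' => SLfree φ ∪ SLfree φ'
  | .next φ => SLfree φ
  | .untl φ φ' => SLfree φ ∪ SLfree φ'
  | .exi x φ => SLfree φ \ {x}
  | .bind _ x φ => insert x (SLfree φ)

mutual
/-- Free variables of a BSL state formula. -/
def BSLfree : BSLForm AP Ag Var → Set Var
  | .atom _ => ∅
  | .neg φ => BSLfree φ
  | .or φ φ' => BSLfree φ ∪ BSLfree φ'
  | .exi x φ => BSLfree φ \ {x}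
  | .bind _ x φ => insert x (BSLfree φ)
  | .unbind _ φ => BSLfree φ
  | .pathE ψ => BSLfreeP ψ
/-- Free variables of a BSL path formula. -/
def BSLfreeP : BSLPath AP Ag Var → Set Var
  | .state φ => BSLfree φ
  | .neg ψ => BSLfreeP ψ
  | .or ψ ψ' => BSLfreeP ψ ∪ BSLfreeP ψ'
  | .next ψ => BSLfreeP ψ
  | .untl ψ ψ' => BSLfreeP ψ ∪ BSLfreeP ψ'
end

/-- `SLdefFor A φ` holds when the SL semantics of `φ` is defined in every
assignment whose agent-domain is `A`: every temporal operator is only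
evaluated under a complete assignment (every agent being bound on the way). -/
def SLdefFor (A : Set Ag) : SLForm AP Ag Var → Prop
  | .atom _ => True
  | .neg φ => SLdefFor A φ
  | .or φ φ' => SLdefFor A φ ∧ SLdefFor A φ'
  | .exi _ φ => SLdefFor A φ
  | .bind a _ φ => SLdefFor (insert a A) φ
  | .next φ => A = Set.univ ∧ SLdefFor A φ
  | .untl φ φ' => A = Set.univ ∧ SLdefFor A φ ∧ SLdefFor A φ'

/-- The translation `tr : SL → BSL`, inserting a path quantifier in front of
each temporal operator and homomorphic elsewhere. -/
def tr : SLForm AP Ag Var → BSLForm AP Ag Var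
  | .atom p => .atom p
  | .neg φ => .neg (tr φ)
  | .or φ φ' => .or (tr φ) (tr φ')
  | .next φ => .pathE (.next (.state (tr φ)))
  | .untl φ φ' => .pathE (.untl (.state (tr φ)) (.state (tr φ')))
  | .exi x φ => .exi x (tr φ)
  | .bind a x φ => .bind a x (tr φ)

mutual
/-- `φ` avoids the fresh variables (those of the form `Sum.inr a`) used by the
translation `tr_A`. -/
def BSLavoidsFresh : BSLForm AP Ag (Var ⊕ Ag) → Prop
  | .atom _ => True
  | .neg φ => BSLavoidsFresh φ
  | .or φ φ' => BSLavoidsFresh φ ∧ BSLavoidsFresh φ'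
  | .exi x φ => x.isLeft ∧ BSLavoidsFresh φ
  | .bind _ x φ => x.isLeft ∧ BSLavoidsFresh φ
  | .unbind _ φ => BSLavoidsFresh φ
  | .pathE ψ => BSLavoidsFreshP ψ
def BSLavoidsFreshP : BSLPath AP Ag (Var ⊕ Ag) → Prop
  | .state φ => BSLavoidsFresh φ
  | .neg ψ => BSLavoidsFreshP ψ
  | .or ψ ψ' => BSLavoidsFreshP ψ ∧ BSLavoidsFreshP ψ'
  | .next ψ => BSLavoidsFreshP ψ
  | .untl ψ ψ' => BSLavoidsFreshP ψ ∧ BSLavoidsFreshP ψ'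
end

/-- Prefix a formula with the bindings `(a, x_a)` for all agents `a` in `l`. -/
def bindList (l : List Ag) (φ : SLForm AP Ag (Var ⊕ Ag)) : SLForm AP Ag (Var ⊕ Ag) :=
  l.foldr (fun a ψ => .bind a (Sum.inr a) ψ) φ

/-- Prefix a formula with the strategy quantifications `⟨⟨x_a⟩⟩` for `a ∈ l`. -/
def quantList (l : List Ag) (φ : SLForm AP Ag (Var ⊕ Ag)) : SLForm AP Ag (Var ⊕ Ag) :=
  l.foldr (fun a ψ => .exi (Sum.inr a) ψ) φ

noncomputable section

mutual
/-- The translation `tr_A : BSL → SL`, parameterized by the set `A` of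
currently unbound agents; each fresh variable for agent `a` is `Sum.inr a`. -/
def trA [DecidableEq Ag] (A : Finset Ag) :
    BSLForm AP Ag (Var ⊕ Ag) → SLForm AP Ag (Var ⊕ Ag)
  | .atom p => .atom p
  | .neg φ => .neg (trA A φ)
  | .or φ φ' => .or (trA A φ) (trA A φ')
  | .exi x φ => .exi x (trA A φ)
  | .bind a x φ => .bind a x (trA (A.erase a) φ)
  | .unbind a φ => trA (insert a A) φ
  | .pathE ψ => quantList A.toList (bindList A.toList (trAP A ψ))
/-- The homomorphic extension of `tr_A` to BSL path formulas. -/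
def trAP [DecidableEq Ag] (A : Finset Ag) :
    BSLPath AP Ag (Var ⊕ Ag) → SLForm AP Ag (Var ⊕ Ag)
  | .state φ => trA A φ
  | .neg ψ => .neg (trAP A ψ)
  | .or ψ ψ' => .or (trAP A ψ) (trAP A ψ')
  | .next ψ => .next (trAP A ψ)
  | .untl ψ ψ' => .untl (trAP A ψ) (trAP A ψ')
end
end

/-!
`tr_A` is applied with `A` the set of agents not yet bound, so the agents in `Aᶜ` are bound on
the way to it. Binding `a` removes it from `A`, unbinding adds it back, and a path quantifier
`E` becomes `⟨⟨x_a⟩⟩_{a ∈ A} (a, x_a)_{a ∈ A}`, which binds the remaining agents before the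
temporal operators of the translated path formula: these are therefore evaluated with every
agent bound. The fresh variables `x_a` are quantified where they are introduced, so `tr_A`
creates no free variables.
-/

theorem SLdefFor.mono {A B : Set Ag} {φ : SLForm AP Ag Var} (hAB : A ⊆ B)
    (h : SLdefFor A φ) : SLdefFor B φ := by
  induction φ generalizing A B with
  | atom => trivial
  | neg _ ih => exact ih hAB h
  | or _ _ ih ih' => exact ⟨ih hAB h.1, ih' hAB h.2⟩
  | next _ ih => exact ⟨Set.eq_univ_of_univ_subset (h.1 ▸ hAB), ih hAB h.2⟩
  | untl _ _ ih ih' =>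
    exact ⟨Set.eq_univ_of_univ_subset (h.1 ▸ hAB), ih hAB h.2.1, ih' hAB h.2.2⟩
  | exi _ _ ih => exact ih hAB h
  | bind _ _ _ ih => exact ih (Set.insert_subset_insert hAB) h

theorem SLdefFor_quantList {B : Set Ag} (l : List Ag) (ψ : SLForm AP Ag (Var ⊕ Ag)) :
    SLdefFor B (quantList l ψ) ↔ SLdefFor B ψ := by
  induction l with
  | nil => rfl
  | cons _ _ ih => exact ih

theorem SLdefFor_bindList (l : List Ag) (ψ : SLForm AP Ag (Var ⊕ Ag)) {B : Set Ag} :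
    SLdefFor B (bindList l ψ) ↔ SLdefFor (B ∪ {a | a ∈ l}) ψ := by
  induction l generalizing B with
  | nil => simp [bindList]
  | cons a l ih =>
    have hB : insert a B ∪ {b | b ∈ l} = B ∪ {b | b ∈ a :: l} := by
      ext b
      simp only [Set.mem_union, Set.mem_insert_iff, Set.mem_ofPred_eq, List.mem_cons]
      tauto
    exact (ih (B := insert a B)).trans (by rw [hB])

theorem SLfree_bindList_subset (l : List Ag) (ψ : SLForm AP Ag (Var ⊕ Ag)) :
    SLfree (bindList l ψ) ⊆ SLfree ψ ∪ Sum.inr '' {a | a ∈ l} := by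
  induction l with
  | nil => simp [bindList]
  | cons a l ih =>
    rintro v (rfl | hv)
    · exact Or.inr ⟨a, List.mem_cons_self, rfl⟩
    · rcases ih hv with hψ | ⟨b, hb, rfl⟩
      · exact Or.inl hψ
      · exact Or.inr ⟨b, List.mem_cons_of_mem a hb, rfl⟩

theorem SLfree_quantList (l : List Ag) (ψ : SLForm AP Ag (Var ⊕ Ag)) :
    SLfree (quantList l ψ) = SLfree ψ \ Sum.inr '' {a | a ∈ l} := by
  induction l with
  | nil => simp [quantList]
  | cons a l ih =>
    change SLfree (quantList l ψ) \ {Sum.inr a} = _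
    rw [ih, Set.sdiff_sdiff, Set.union_comm, ← Set.insert_eq, ← Set.image_insert_eq]
    simp only [List.mem_cons, Set.insert_def]
    rfl

theorem SLfree_quantList_bindList_subset (l : List Ag) (ψ : SLForm AP Ag (Var ⊕ Ag)) :
    SLfree (quantList l (bindList l ψ)) ⊆ SLfree ψ := by
  rw [SLfree_quantList, Set.sdiff_subset_iff, Set.union_comm]
  exact SLfree_bindList_subset l ψ

section Translation

variable [DecidableEq Ag]

mutual

theorem SLdefFor_trA [Fintype Ag] :
    ∀ (φ : BSLForm AP Ag (Var ⊕ Ag)) (A : Finset Ag), SLdefFor (↑(Aᶜ) : Set Ag) (trA A φ)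
  | .atom _, _ => trivial
  | .neg φ, A => SLdefFor_trA φ A
  | .or φ φ', A => ⟨SLdefFor_trA φ A, SLdefFor_trA φ' A⟩
  | .exi _ φ, A => SLdefFor_trA φ A
  | .bind a _ φ, A => by
    have h := SLdefFor_trA φ (A.erase a)
    rwa [Finset.compl_erase, Finset.coe_insert] at h
  | .unbind a φ, A =>
    (SLdefFor_trA φ (insert a A)).mono <| by
      rw [Finset.compl_insert, Finset.coe_subset]
      exact Finset.erase_subset a Aᶜ
  | .pathE ψ, A => by
    have hA : (↑(Aᶜ) : Set Ag) ∪ {a | a ∈ A.toList} = Set.univ := by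
      ext a
      simp
    change SLdefFor _ (quantList A.toList (bindList A.toList (trAP A ψ)))
    rw [SLdefFor_quantList, SLdefFor_bindList, hA]
    exact SLdefFor_trAP ψ A

theorem SLdefFor_trAP [Fintype Ag] :
    ∀ (ψ : BSLPath AP Ag (Var ⊕ Ag)) (A : Finset Ag), SLdefFor Set.univ (trAP A ψ)
  | .state φ, A => (SLdefFor_trA φ A).mono (Set.subset_univ _)
  | .neg ψ, A => SLdefFor_trAP ψ A
  | .or ψ ψ', A => ⟨SLdefFor_trAP ψ A, SLdefFor_trAP ψ' A⟩
  | .next ψ, A => ⟨rfl, SLdefFor_trAP ψ A⟩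
  | .untl ψ ψ', A => ⟨rfl, SLdefFor_trAP ψ A, SLdefFor_trAP ψ' A⟩

end

mutual

theorem SLfree_trA_subset :
    ∀ (φ : BSLForm AP Ag (Var ⊕ Ag)) (A : Finset Ag), SLfree (trA A φ) ⊆ BSLfree φ
  | .atom _, _ => subset_rfl
  | .neg φ, A => SLfree_trA_subset φ A
  | .or φ φ', A => Set.union_subset_union (SLfree_trA_subset φ A) (SLfree_trA_subset φ' A)
  | .exi _ φ, A => Set.sdiff_subset_sdiff_left (SLfree_trA_subset φ A)
  | .bind a _ φ, A => Set.insert_subset_insert (SLfree_trA_subset φ (A.erase a))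
  | .unbind a φ, A => SLfree_trA_subset φ (insert a A)
  | .pathE ψ, A =>
    (SLfree_quantList_bindList_subset A.toList (trAP A ψ)).trans (SLfree_trAP_subset ψ A)

theorem SLfree_trAP_subset :
    ∀ (ψ : BSLPath AP Ag (Var ⊕ Ag)) (A : Finset Ag), SLfree (trAP A ψ) ⊆ BSLfreeP ψ
  | .state φ, A => SLfree_trA_subset φ A
  | .neg ψ, A => SLfree_trAP_subset ψ A
  | .or ψ ψ', A => Set.union_subset_union (SLfree_trAP_subset ψ A) (SLfree_trAP_subset ψ' A)
  | .next ψ, A => SLfree_trAP_subset ψ A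
  | .untl ψ ψ', A => Set.union_subset_union (SLfree_trAP_subset ψ A) (SLfree_trAP_subset ψ' A)

end

end Translation

/-- in `tr_A(φ)` every temporal operator is under the scope of a
binding for each agent not in `A` having already been bound (in particular,
with `A = Ag`, under a binding for every agent); and if `φ` is a BSL sentence
then `tr_Ag(φ)` is an SL sentence. (In BSL, every temporal operator is
syntactically under a path quantifier, so no hypothesis on `φ` is needed.) -/
theorem statement_9 [DecidableEq Ag] [Fintype Ag]
    (φ : BSLForm AP Ag (Var ⊕ Ag)) (A : Finset Ag) :
    SLdefFor ((↑(Aᶜ) : Set Ag)) (trA A φ) ∧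
      (BSLfree φ = ∅ →
        SLfree (trA Finset.univ φ) = ∅ ∧
          SLdefFor (∅ : Set Ag) (trA Finset.univ φ)) := by
  refine ⟨SLdefFor_trA φ A, fun hφ => ⟨?_, ?_⟩⟩
  · exact Set.subset_empty_iff.mp (hφ ▸ SLfree_trA_subset φ Finset.univ)
  · simpa using SLdefFor_trA φ (Finset.univ : Finset Ag)
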